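/- Let k ≥ 2. The k+2 functions H, p_x, p_y, and C̃_i := C_i(P_2,…,P_{k+2}) for i = 2,…,k, viewed as functions on ℝ^{2(k+2)}, pairwise Poisson-commute: the canonical Poisson bracket of any two of them vanishes identically. -/

import Mathlib

/-- The power functions `P_1, …, P_{k+2}` (0-indexed: `powerFn k a` is `P_{a+1}`) on the
phase space `T^* J^k ≅ ℝ^{k+2} × ℝ^{k+2}`.  Configuration coordinates are indexed so that
`q 0 = x`, `q i = u_{k+1-i}` for `1 ≤ i ≤ k`, `q (k+1) = y`, and `p i` is the momentum
conjugate to `q i` (so `p 0 = p_x`, `p 1 = p_k`, …, `p k = p_1`, `p (k+1) = p_y`).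
Then `P_1 = p_x + u_1 p_y + ∑_{i=2}^k u_i p_{i-1} = p 0 + ∑_{j=1}^{k} q j * p (j+1)`,
and `P_m = p (m-1)` for `2 ≤ m ≤ k+2`. -/
noncomputable def powerFn (k : ℕ) (a : Fin (k + 2))
    (z : (Fin (k + 2) → ℝ) × (Fin (k + 2) → ℝ)) : ℝ :=
  if a = ⟨0, by omega⟩ then
    z.2 ⟨0, by omega⟩ + ∑ j : Fin k, z.1 ⟨j.1 + 1, by omega⟩ * z.2 ⟨j.1 + 2, by omega⟩
  else z.2 a

/-- The sub-Riemannian geodesic Hamiltonian `H = (1/2)(P_1² + P_2²)`. -/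
noncomputable def jetHam (k : ℕ) (z : (Fin (k + 2) → ℝ) × (Fin (k + 2) → ℝ)) : ℝ :=
  (1 / 2) * (powerFn k ⟨0, by omega⟩ z ^ 2 + powerFn k ⟨1, by omega⟩ z ^ 2)

/-- The canonical Poisson bracket `{f,g} = ∑_q (∂f/∂q ∂g/∂p_q − ∂f/∂p_q ∂g/∂q)` on
`ℝ^{2(k+2)} = (Fin (k+2) → ℝ) × (Fin (k+2) → ℝ)` (first factor: configuration coordinates,
second factor: conjugate momenta). -/
noncomputable def poissonBracket (k : ℕ)
    (f g : ((Fin (k + 2) → ℝ) × (Fin (k + 2) → ℝ)) → ℝ)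
    (z : (Fin (k + 2) → ℝ) × (Fin (k + 2) → ℝ)) : ℝ :=
  ∑ i : Fin (k + 2),
    (fderiv ℝ f z ((Pi.single i 1 : Fin (k + 2) → ℝ), (0 : Fin (k + 2) → ℝ)) *
        fderiv ℝ g z ((0 : Fin (k + 2) → ℝ), (Pi.single i 1 : Fin (k + 2) → ℝ)) -
      fderiv ℝ f z ((0 : Fin (k + 2) → ℝ), (Pi.single i 1 : Fin (k + 2) → ℝ)) *
        fderiv ℝ g z ((Pi.single i 1 : Fin (k + 2) → ℝ), (0 : Fin (k + 2) → ℝ)))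

/-- The Casimir functions `C_1, …, C_k` of the variables `(P_2, …, P_{k+2})`:
`C_1 = P_{k+2}` and, for `2 ≤ i ≤ k`,
`C_i = P_{k+2}^{i-1} P_{k+2-i} + ∑_{j=1}^{i-2} (−1)^j P_{k+2}^{i-1-j} P_{k+2-i+j} P_{k+1}^j/j!
      + (−1)^{i-1} P_{k+1}^i/((i−2)!·i)`.
Here `P : ℕ → ℝ` records the values of the variables (1-based indexing). -/
noncomputable def casimir (k i : ℕ) (P : ℕ → ℝ) : ℝ :=
  if i = 1 then P (k + 2)
  else
    P (k + 2) ^ (i - 1) * P (k + 2 - i)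
      + ∑ j ∈ Finset.Icc 1 (i - 2),
          (-1 : ℝ) ^ j * P (k + 2) ^ (i - 1 - j) * P (k + 2 - i + j) * P (k + 1) ^ j
            / (Nat.factorial j : ℝ)
      + (-1 : ℝ) ^ (i - 1) * P (k + 1) ^ i / ((Nat.factorial (i - 2) : ℝ) * (i : ℝ))

/-- The values of the power functions `P_1, …, P_{k+2}` at a phase point, with 1-based
indexing (so `phaseVals k z m = P_m(z)` for `1 ≤ m ≤ k+2`, and `0` otherwise). -/
noncomputable def phaseVals (k : ℕ) (z : (Fin (k + 2) → ℝ) × (Fin (k + 2) → ℝ)) : ℕ → ℝ :=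
  fun m => if h : 1 ≤ m ∧ m ≤ k + 2 then powerFn k ⟨m - 1, by omega⟩ z else 0

/-- The `k+2` first integrals: `integralFamily k 0 = H`, `integralFamily k 1 = p_x`,
`integralFamily k 2 = p_y`, and `integralFamily k j = C̃_{j-1} = C_{j-1}(P_2, …, P_{k+2})`
for `3 ≤ j ≤ k+1`. -/
noncomputable def integralFamily (k : ℕ) (j : Fin (k + 2)) :
    ((Fin (k + 2) → ℝ) × (Fin (k + 2) → ℝ)) → ℝ :=
  if j.1 = 0 then jetHam k
  else if j.1 = 1 then fun z => z.2 ⟨0, by omega⟩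
  else if j.1 = 2 then fun z => z.2 ⟨k + 1, by omega⟩
  else fun z => casimir k (j.1 - 1) (phaseVals k z)

/-! Every integral other than `H` is a function `F` of the momenta alone, so the brackets among
them vanish. Since `∂P_1/∂q_j = p_{j+1}` for `1 ≤ j ≤ k` while `P_1` is the only power function
depending on `q`, one gets `{H, F} = P_1 · dF(w)` for the shift field `w_j = p_{j+1}`
(`w_0 = w_{k+1} = 0`). The field `w` kills `p_x` and `p_y`, and on the variables `P_2, …, P_{k+2}`
it acts as the derivation `D P_m = P_{m+1}`, `D P_{k+2} = 0`. Applied to `C_i` the terms of `D C_i`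
telescope, and what is left cancels against the derivative of the last term `P_{k+1}^i`. -/

open Finset Nat

section Casimir

theorem casimir_add_two (k n : ℕ) (P : ℕ → ℝ) :
    casimir k (n + 2) P = P (k + 2) ^ (n + 1) * P (k - n)
      + ∑ j ∈ Icc 1 n, (-1) ^ j / (j ! : ℝ) * (P (k + 2) ^ (n + 1 - j) * P (k - n + j) * P (k + 1) ^ j)
      + (-1) ^ (n + 1) / (n ! * (n + 2 : ℝ)) * P (k + 1) ^ (n + 2) := by
  simp only [casimir, show n + 2 ≠ 1 by omega, if_false, Nat.add_sub_add_right, Nat.add_sub_cancel]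
  push_cast
  congr 2 <;> try (refine sum_congr rfl fun j _ => ?_)
  all_goals ring

theorem casimir_congr {k i : ℕ} (hi : 2 ≤ i) {P Q : ℕ → ℝ} (h : ∀ m, k + 2 - i ≤ m → P m = Q m) :
    casimir k i P = casimir k i Q := by
  obtain ⟨n, rfl⟩ : ∃ n, i = n + 2 := ⟨i - 2, by omega⟩
  simp only [casimir_add_two, h (k + 2) (by omega), h (k + 1) (by omega), h (k - n) (by omega)]
  congr 2
  exact sum_congr rfl fun j _ => by rw [h (k - n + j) (by omega)]

theorem casimir_telescope (n : ℕ) (a b : ℝ) (c : ℕ → ℝ) (hc : c (n + 1) = b) :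
    a ^ (n + 1) * c 1 + ∑ j ∈ Icc 1 n, (-1) ^ j / (j ! : ℝ) *
        (a ^ (n + 1 - j) * c (j + 1) * b ^ j + j * a ^ (n + 2 - j) * c j * b ^ (j - 1)) =
      (-1) ^ n / (n ! : ℝ) * a * b ^ (n + 1) := by
  set U : ℕ → ℝ := fun j => (-1) ^ j / (j ! : ℝ) * a ^ (n + 1 - j) * c (j + 1) * b ^ j
  have hterm : ∀ j ∈ Ico 1 (n + 1), (-1) ^ j / (j ! : ℝ) *
      (a ^ (n + 1 - j) * c (j + 1) * b ^ j + j * a ^ (n + 2 - j) * c j * b ^ (j - 1)) =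
      U ((j + 1) - 1) - U (j - 1) := by
    intro j hj
    obtain ⟨m, rfl⟩ : ∃ m, j = m + 1 := ⟨j - 1, by simp at hj; omega⟩
    simp only [U, Nat.add_sub_cancel, factorial_succ, show n + 2 - (m + 1) = n + 1 - m by omega]
    push_cast
    field_simp
    ring
  rw [← Ico_add_one_right_eq_Icc, sum_congr rfl hterm, sum_Ico_sub (fun j => U (j - 1)) (by omega)]
  simp only [U, Nat.add_sub_cancel, hc, show n + 1 - n = 1 by omega, tsub_self, tsub_zero, pow_zero,
    pow_one, factorial_zero, cast_one, div_one, one_mul, mul_one, zero_add]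
  ring

variable {E : Type*} [NormedAddCommGroup E] [NormedSpace ℝ E]

theorem differentiableAt_casimir {k i : ℕ} {P : ℕ → E → ℝ} {x : E}
    (hP : ∀ m, DifferentiableAt ℝ (P m) x) :
    DifferentiableAt ℝ (fun y => casimir k i (fun m => P m y)) x := by
  unfold casimir
  split_ifs <;> fun_prop

theorem fderiv_casimir_eq_zero {k i : ℕ} (hi : 2 ≤ i) (hik : i ≤ k + 2) {P : ℕ → E → ℝ} {x v : E}
    (hP : ∀ m, DifferentiableAt ℝ (P m) x) (htop : fderiv ℝ (P (k + 2)) x v = 0)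
    (hshift : ∀ m, k + 2 - i ≤ m → m ≤ k + 1 → fderiv ℝ (P m) x v = P (m + 1) x) :
    fderiv ℝ (fun y => casimir k i (fun m => P m y)) x v = 0 := by
  obtain ⟨n, rfl⟩ : ∃ n, i = n + 2 := ⟨i - 2, by omega⟩
  have hb : fderiv ℝ (P (k + 1)) x v = P (k + 2) x := hshift (k + 1) (by omega) le_rfl
  have hc : ∀ j ≤ n, fderiv ℝ (P (k - n + j)) x v = P (k - n + (j + 1)) x :=
    fun j hj => hshift _ (by omega) (by omega)
  have hlead : fderiv ℝ (fun y => P (k + 2) y ^ (n + 1) * P (k - n) y) x v =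
      P (k + 2) x ^ (n + 1) * P (k - n + 1) x := by
    simp (disch := fun_prop) [fderiv_fun_mul, fderiv_fun_pow, htop, ← hc 0 (zero_le n)]
  have hmid : ∀ j ∈ Icc 1 n, fderiv ℝ (fun y => (-1) ^ j / (j ! : ℝ) *
      (P (k + 2) y ^ (n + 1 - j) * P (k - n + j) y * P (k + 1) y ^ j)) x v =
      (-1) ^ j / (j ! : ℝ) * (P (k + 2) x ^ (n + 1 - j) * P (k - n + (j + 1)) x * P (k + 1) x ^ j
        + j * P (k + 2) x ^ (n + 2 - j) * P (k - n + j) x * P (k + 1) x ^ (j - 1)) := by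
    intro j hj
    rw [mem_Icc] at hj
    simp (disch := fun_prop) only [fderiv_const_mul, fderiv_fun_mul, fderiv_fun_pow, nsmul_eq_mul,
      smul_add, add_apply, smul_apply, smul_eq_mul, hb, hc j hj.2, htop, mul_zero, add_zero,
      show n + 2 - j = n + 1 - j + 1 by omega]
    ring
  have hlast : fderiv ℝ (fun y => (-1) ^ (n + 1) / (n ! * (n + 2 : ℝ)) * P (k + 1) y ^ (n + 2)) x v =
      (-1) ^ (n + 1) / (n ! * (n + 2 : ℝ)) * ((n + 2) * P (k + 1) x ^ (n + 1) * P (k + 2) x) := by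
    simp (disch := fun_prop) [fderiv_const_mul, fderiv_fun_pow, hb]
  have key := casimir_telescope n (P (k + 2) x) (P (k + 1) x) (fun j => P (k - n + j) x)
    (congrArg (P · x) (by omega))
  simp only [casimir_add_two]
  rw [fderiv_fun_add (by fun_prop) (by fun_prop), fderiv_fun_add (by fun_prop) (by fun_prop),
    fderiv_fun_sum (by fun_prop)]
  simp only [add_apply, FunLike.coe_sum, Finset.sum_apply, hlead, sum_congr rfl hmid, hlast]
  rw [key]
  field_simp
  ring

end Casimir

def momentumShift (k : ℕ) (p : Fin (k + 2) → ℝ) (r : Fin (k + 2)) : ℝ :=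
  if h : 1 ≤ r.1 ∧ r.1 ≤ k then p ⟨r.1 + 1, by omega⟩ else 0

def IsShiftInvariant (k : ℕ) (F : (Fin (k + 2) → ℝ) → ℝ) : Prop :=
  Differentiable ℝ F ∧ ∀ p, fderiv ℝ F p (momentumShift k p) = 0

section PhaseSpace

variable {k : ℕ}

theorem fderiv_comp_snd {F : (Fin (k + 2) → ℝ) → ℝ} {z : (Fin (k + 2) → ℝ) × (Fin (k + 2) → ℝ)}
    (hF : DifferentiableAt ℝ F z.2) :
    fderiv ℝ (fun z => F z.2) z = (fderiv ℝ F z.2).comp (.snd ℝ _ _) :=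
  (hF.hasFDerivAt.comp z hasFDerivAt_snd).fderiv

theorem poissonBracket_self (f : ((Fin (k + 2) → ℝ) × (Fin (k + 2) → ℝ)) → ℝ)
    (z : (Fin (k + 2) → ℝ) × (Fin (k + 2) → ℝ)) : poissonBracket k f f z = 0 :=
  sum_eq_zero fun _ _ => by ring

theorem poissonBracket_comm (f g : ((Fin (k + 2) → ℝ) × (Fin (k + 2) → ℝ)) → ℝ)
    (z : (Fin (k + 2) → ℝ) × (Fin (k + 2) → ℝ)) :
    poissonBracket k f g z = -poissonBracket k g f z := by
  rw [poissonBracket, poissonBracket, ← sum_neg_distrib]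
  exact sum_congr rfl fun _ _ => by ring

theorem poissonBracket_comp_snd_right (f : ((Fin (k + 2) → ℝ) × (Fin (k + 2) → ℝ)) → ℝ)
    {F : (Fin (k + 2) → ℝ) → ℝ} {z : (Fin (k + 2) → ℝ) × (Fin (k + 2) → ℝ)}
    (hF : DifferentiableAt ℝ F z.2) :
    poissonBracket k f (fun z => F z.2) z =
      fderiv ℝ F z.2 (fun i => fderiv ℝ f z (Pi.single i 1, 0)) := by
  rw [poissonBracket, fderiv_comp_snd hF]
  conv_rhs => rw [pi_eq_sum_univ' (fun i => fderiv ℝ f z (Pi.single i 1, 0))]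
  simp [map_sum]

theorem poissonBracket_comp_snd_comp_snd {F G : (Fin (k + 2) → ℝ) → ℝ}
    {z : (Fin (k + 2) → ℝ) × (Fin (k + 2) → ℝ)} (hF : DifferentiableAt ℝ F z.2)
    (hG : DifferentiableAt ℝ G z.2) :
    poissonBracket k (fun z => F z.2) (fun z => G z.2) z = 0 := by
  rw [poissonBracket_comp_snd_right _ hG, fderiv_comp_snd hF]
  simp only [ContinuousLinearMap.comp_apply, ContinuousLinearMap.coe_snd', map_zero]
  exact map_zero _

theorem sum_mul_single_eq_momentumShift (p : Fin (k + 2) → ℝ) (i : Fin (k + 2)) :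
    ∑ j : Fin k, p ⟨j.1 + 2, by omega⟩ * (Pi.single i 1 : Fin (k + 2) → ℝ) ⟨j.1 + 1, by omega⟩ =
      momentumShift k p i := by
  simp only [Pi.single_apply, Fin.ext_iff, mul_ite, mul_one, mul_zero, momentumShift]
  split_ifs with hi
  · rw [sum_eq_single ⟨i.1 - 1, by omega⟩
      (fun j _ hj => if_neg fun h => hj (Fin.ext (by simp; omega))) (by simp)]
    simp only [show i.1 - 1 + 1 = i.1 by omega, if_true, show i.1 - 1 + 2 = i.1 + 1 by omega]
  · exact sum_eq_zero fun j _ => if_neg (by omega)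

theorem powerFn_zero_eq : powerFn k 0 = fun z =>
    z.2 0 + ∑ j : Fin k, z.1 ⟨j.1 + 1, by omega⟩ * z.2 ⟨j.1 + 2, by omega⟩ := by
  funext z
  simp [powerFn]

theorem fderiv_powerFn_zero_apply_inl (z : (Fin (k + 2) → ℝ) × (Fin (k + 2) → ℝ))
    (i : Fin (k + 2)) :
    fderiv ℝ (powerFn k 0) z (Pi.single i 1, 0) = momentumShift k z.2 i := by
  rw [powerFn_zero_eq, ← sum_mul_single_eq_momentumShift]
  simp (disch := fun_prop) [fderiv_fun_add, fderiv_fun_sum, fderiv_fun_mul, fderiv_apply,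
    fderiv_fst, fderiv_snd]

theorem fderiv_jetHam_apply_inl (z : (Fin (k + 2) → ℝ) × (Fin (k + 2) → ℝ)) (i : Fin (k + 2)) :
    fderiv ℝ (jetHam k) z (Pi.single i 1, 0) = powerFn k 0 z * momentumShift k z.2 i := by
  have h0 : DifferentiableAt ℝ (powerFn k 0) z := by
    rw [powerFn_zero_eq]
    fun_prop
  have h1 : powerFn k 1 = fun z => z.2 1 := by
    funext z
    simp [powerFn]
  unfold jetHam
  simp only [Fin.mk_one, Fin.zero_eta, h1]
  simp (disch := fun_prop) only [fderiv_const_mul, fderiv_fun_add, fderiv_fun_pow, fderiv_apply,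
    fderiv_snd, fderiv_powerFn_zero_apply_inl, nsmul_eq_mul, smul_add, add_apply, smul_apply,
    smul_eq_mul, ContinuousLinearMap.comp_apply, ContinuousLinearMap.coe_snd',
    ContinuousLinearMap.proj_apply, Pi.zero_apply, mul_zero, add_zero]
  ring

theorem poissonBracket_jetHam_comp_snd {F : (Fin (k + 2) → ℝ) → ℝ}
    {z : (Fin (k + 2) → ℝ) × (Fin (k + 2) → ℝ)} (hF : DifferentiableAt ℝ F z.2) :
    poissonBracket k (jetHam k) (fun z => F z.2) z =
      powerFn k 0 z * fderiv ℝ F z.2 (momentumShift k z.2) := by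
  rw [poissonBracket_comp_snd_right _ hF, ← smul_eq_mul, ← map_smul]
  simp only [fderiv_jetHam_apply_inl]
  rfl

theorem IsShiftInvariant.poissonBracket_jetHam {F : (Fin (k + 2) → ℝ) → ℝ}
    (hF : IsShiftInvariant k F) (z : (Fin (k + 2) → ℝ) × (Fin (k + 2) → ℝ)) :
    poissonBracket k (jetHam k) (fun z => F z.2) z = 0 := by
  rw [poissonBracket_jetHam_comp_snd (hF.1 _), hF.2, mul_zero]

end PhaseSpace

def momentumVals (k : ℕ) (p : Fin (k + 2) → ℝ) (m : ℕ) : ℝ :=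
  if h : 2 ≤ m ∧ m ≤ k + 2 then p ⟨m - 1, by omega⟩ else 0

section Integrals

variable {k : ℕ}

theorem phaseVals_eq_momentumVals (z : (Fin (k + 2) → ℝ) × (Fin (k + 2) → ℝ)) {m : ℕ}
    (hm : 2 ≤ m) : phaseVals k z m = momentumVals k z.2 m := by
  simp only [phaseVals, momentumVals, powerFn, Fin.ext_iff]
  split_ifs <;> first | rfl | omega

theorem momentumVals_momentumShift (p : Fin (k + 2) → ℝ) {m : ℕ} (hm : 2 ≤ m) :
    momentumVals k (momentumShift k p) m = momentumVals k p (m + 1) := by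
  simp only [momentumVals, momentumShift]
  split_ifs <;> first | rfl | omega | (congr 2; omega)

theorem differentiable_momentumVals (m : ℕ) :
    Differentiable ℝ (fun p : Fin (k + 2) → ℝ => momentumVals k p m) := by
  unfold momentumVals
  split_ifs <;> fun_prop

theorem fderiv_momentumVals (m : ℕ) (p v : Fin (k + 2) → ℝ) :
    fderiv ℝ (fun p => momentumVals k p m) p v = momentumVals k v m := by
  unfold momentumVals
  split_ifs <;> simp [fderiv_apply]

theorem isShiftInvariant_apply_zero : IsShiftInvariant k (fun p => p 0) :=
  ⟨by fun_prop, fun p => by simp [fderiv_apply, momentumShift]⟩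

theorem isShiftInvariant_apply_last : IsShiftInvariant k (fun p => p (Fin.last (k + 1))) :=
  ⟨by fun_prop, fun p => by simp [fderiv_apply, momentumShift]⟩

theorem isShiftInvariant_casimir {i : ℕ} (hi : 2 ≤ i) (hik : i ≤ k) :
    IsShiftInvariant k (fun p => casimir k i (momentumVals k p)) := by
  have hP := differentiable_momentumVals (k := k)
  refine ⟨fun p => differentiableAt_casimir fun m => hP m p, fun p => ?_⟩
  refine fderiv_casimir_eq_zero hi (by omega) (fun m => hP m p) ?_ fun m hm _ => ?_
  · rw [fderiv_momentumVals, momentumVals_momentumShift p (by omega)]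
    simp [momentumVals]
  · rw [fderiv_momentumVals, momentumVals_momentumShift p (by omega)]

theorem integralFamily_of_val_eq_zero {a : Fin (k + 2)} (ha : a.1 = 0) :
    integralFamily k a = jetHam k := by
  simp [integralFamily, ha]

theorem exists_isShiftInvariant_integralFamily_eq {b : Fin (k + 2)} (hb : b.1 ≠ 0) :
    ∃ F, IsShiftInvariant k F ∧ integralFamily k b = fun z => F z.2 := by
  by_cases h1 : b.1 = 1
  · exact ⟨_, isShiftInvariant_apply_zero, by simp [integralFamily, h1]⟩
  by_cases h2 : b.1 = 2
  · exact ⟨_, isShiftInvariant_apply_last, by simp [integralFamily, h2]; rfl⟩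
  refine ⟨_, isShiftInvariant_casimir (i := b.1 - 1) (by omega) (by omega), ?_⟩
  simp only [integralFamily, hb, h1, h2, if_false]
  funext z
  exact casimir_congr (by omega) fun m hm => phaseVals_eq_momentumVals z (by omega)

end Integrals

theorem stmt_4_general (k : ℕ) (a b : Fin (k + 2))
    (z : (Fin (k + 2) → ℝ) × (Fin (k + 2) → ℝ)) :
    poissonBracket k (integralFamily k a) (integralFamily k b) z = 0 := by
  rcases eq_or_ne a.1 0 with ha | ha <;> rcases eq_or_ne b.1 0 with hb | hb
  · rw [Fin.ext (ha.trans hb.symm), poissonBracket_self]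
  · obtain ⟨G, hG, hGb⟩ := exists_isShiftInvariant_integralFamily_eq hb
    rw [integralFamily_of_val_eq_zero ha, hGb, hG.poissonBracket_jetHam]
  · obtain ⟨F, hF, hFa⟩ := exists_isShiftInvariant_integralFamily_eq ha
    rw [poissonBracket_comm, integralFamily_of_val_eq_zero hb, hFa, hF.poissonBracket_jetHam,
      neg_zero]
  · obtain ⟨F, hF, hFa⟩ := exists_isShiftInvariant_integralFamily_eq ha
    obtain ⟨G, hG, hGb⟩ := exists_isShiftInvariant_integralFamily_eq hb
    rw [hFa, hGb, poissonBracket_comp_snd_comp_snd (hF.1 _) (hG.1 _)]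

/-- the `k+2` functions `H`, `p_x`, `p_y`, `C̃_2, …, C̃_k` pairwise
Poisson-commute on `ℝ^{2(k+2)}`. -/
theorem stmt_4 (k : ℕ) (hk : 2 ≤ k) (a b : Fin (k + 2))
    (z : (Fin (k + 2) → ℝ) × (Fin (k + 2) → ℝ)) :
    poissonBracket k (integralFamily k a) (integralFamily k b) z = 0 :=
  stmt_4_general k a b z
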